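/- (Fundamental theorem, existence of basic optimal solutions.) Consider the constraint system A_E *ᵥ x = b_E, A_I *ᵥ x ≥ b_I, ℓ ≤ x ≤ u. Combine all constraint rows into the family r : (Fin m ⊕ Fin n ⊕ Fin d ⊕ Fin d) → (Fin d → ℝ) where r assigns to the first summand the rows of A_E, to the second summand the rows of A_I, to the third summand the standard basis vectors e_i (for the lower bounds x_i ≥ ℓ_i), and to the fourth summand the vectors −e_i (for the upper bounds −x_i ≥ −u_i), with corresponding right-hand sides β given by b_E, b_I, ℓ, and −u. Call a vector x a basic solution if there exists a finset S of indices with S.card = d such that the family of rows (r s)_{s ∈ S} is linearly independent over ℝ and r s ⬝ᵥ x = β s for every s ∈ S. If there exists a feasible x₀ with c ⬝ᵥ x₀ ≤ c ⬝ᵥ x̄ for every feasible x̄ (an optimal solution), then there exists a basic feasible x* with c ⬝ᵥ x* ≤ c ⬝ᵥ x̄ for every feasible x̄ (a basic optimal solution). -/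

import Mathlib

/-!
Among the optimal solutions choose one, `x`, whose set of active constraints is maximal. If
the active rows did not span `ℝᵈ`, some `z ≠ 0` would be orthogonal to all of them. The bound
constraints make some row non-orthogonal to `z`, so after replacing `z` by `-z` if necessary,
`c ⬝ᵥ z ≤ 0` and some row decreases along `z`. The ratio test then moves `x` along `z` to the
first blocking constraint: the new point is feasible, still optimal, and has strictly more active
constraints. Hence the active rows span `ℝᵈ`, and any basis chosen among them is the set `S`.
-/

open Matrix

lemma exists_ratio_test {ι : Type*} [Finite ι] (σ δ : ι → ℝ) (hσ : ∀ s, 0 ≤ σ s)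
    (hδ : ∃ s, δ s < 0) :
    ∃ t : ℝ, 0 ≤ t ∧ (∀ s, 0 ≤ σ s + t * δ s) ∧ ∃ s, δ s < 0 ∧ σ s + t * δ s = 0 := by
  obtain ⟨s₀, hs₀, hmin⟩ :=
    Set.exists_min_image {s | δ s < 0} (fun s => σ s / -δ s) (Set.toFinite _) hδ
  replace hs₀ : δ s₀ < 0 := hs₀
  have hs₀' : 0 < -δ s₀ := neg_pos.2 hs₀
  refine ⟨σ s₀ / -δ s₀, div_nonneg (hσ s₀) hs₀'.le, fun s => ?_, s₀, hs₀, ?_⟩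
  · by_cases hs : δ s < 0
    · have := (le_div_iff₀ (neg_pos.2 hs)).1 (hmin s hs)
      linarith
    · have := mul_nonneg (div_nonneg (hσ s₀) hs₀'.le) (not_lt.1 hs)
      linarith [hσ s]
  · field_simp [hs₀.ne]
    ring

lemma exists_ne_zero_forall_mem_dotProduct_eq_zero {K κ : Type*} [Field K] [Fintype κ]
    {W : Submodule K (κ → K)} (hW : W < ⊤) : ∃ z ≠ 0, ∀ w ∈ W, w ⬝ᵥ z = 0 := by
  classical
  obtain ⟨f, hf0, hf⟩ := W.exists_dual_map_eq_bot_of_lt_top hW inferInstance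
  refine ⟨(dotProductEquiv K κ).symm f, by simpa using hf0, fun w hw => ?_⟩
  rw [dotProduct_comm, ← dotProductEquiv_apply_apply, LinearEquiv.apply_symm_apply]
  exact (Submodule.eq_bot_iff _).1 hf (f w) (Submodule.mem_map_of_mem hw)

lemma exists_finset_linearIndependent_of_span_image_eq_top {K V ι : Type*} [Field K]
    [AddCommGroup V] [Module K V] [FiniteDimensional K V] {v : ι → V} {T : Set ι}
    (h : Submodule.span K (v '' T) = ⊤) :
    ∃ S : Finset ι, ↑S ⊆ T ∧ S.card = Module.finrank K V ∧
      LinearIndependent K (fun s : S => v s) := by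
  obtain ⟨b, hbT, -, hTb, hli⟩ :=
    exists_linearIndepOn_extension (linearIndepOn_empty K v) (Set.empty_subset T)
  lift b to Finset ι using Set.finite_coe_iff.1 hli.finite
  have hcard := linearIndependent_iff_card_eq_finrank_span.1 hli
  have hspan : Submodule.span K (v '' b) = ⊤ := eq_top_iff.2 (h ▸ Submodule.span_le.2 hTb)
  rw [Set.finrank, ← Set.image_eq_range, hspan, finrank_top] at hcard
  simp only [Finset.coe_sort_coe, Fintype.card_coe] at hcard
  exact ⟨b, hbT, hcard, hli⟩

section Polyhedron

variable {ι κ : Type*} [Fintype κ] (r : ι → κ → ℝ) (β : ι → ℝ)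

def activeSet (x : κ → ℝ) : Set ι := {s | r s ⬝ᵥ x = β s}

/-- `E` indexes the constraints imposed with equality. -/
def feasibleSet (E : Set ι) : Set (κ → ℝ) :=
  {x | (∀ s, β s ≤ r s ⬝ᵥ x) ∧ E ⊆ activeSet r β x}

variable {r β}

lemma activeSet_subset_activeSet_add_smul {x z : κ → ℝ}
    (hz : ∀ s ∈ activeSet r β x, r s ⬝ᵥ z = 0) (t : ℝ) :
    activeSet r β x ⊆ activeSet r β (x + t • z) := fun s hs => by
  simp_all [activeSet, dotProduct_add]

lemma exists_add_smul_activeSet_ssubset [Finite ι] {x z : κ → ℝ} (hx : ∀ s, β s ≤ r s ⬝ᵥ x)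
    (hz : ∀ s ∈ activeSet r β x, r s ⬝ᵥ z = 0) (hneg : ∃ s, r s ⬝ᵥ z < 0) :
    ∃ t : ℝ, 0 ≤ t ∧ (∀ s, β s ≤ r s ⬝ᵥ (x + t • z)) ∧
      activeSet r β x ⊂ activeSet r β (x + t • z) := by
  obtain ⟨t, ht, hfeas, s₀, hs₀, hs₀t⟩ :=
    exists_ratio_test (fun s => r s ⬝ᵥ x - β s) (fun s => r s ⬝ᵥ z) (fun s => by linarith [hx s])
      hneg
  have hstep (s : ι) : r s ⬝ᵥ (x + t • z) = r s ⬝ᵥ x + t * r s ⬝ᵥ z := by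
    simp [dotProduct_add, dotProduct_smul]
  refine ⟨t, ht, fun s => by linarith [hfeas s, hstep s], ?_⟩
  refine (Set.ssubset_iff_of_subset (activeSet_subset_activeSet_add_smul hz t)).2 ⟨s₀, ?_, ?_⟩
  · show r s₀ ⬝ᵥ (x + t • z) = β s₀
    linarith [hstep s₀]
  · exact fun h => hs₀.ne (hz s₀ h)

variable {E : Set ι} {c : κ → ℝ}

lemma exists_isMinOn_activeSet_ssubset [Finite ι] {x z : κ → ℝ} (hx : x ∈ feasibleSet r β E)
    (hmin : IsMinOn (c ⬝ᵥ ·) (feasibleSet r β E) x)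
    (hz : ∀ s ∈ activeSet r β x, r s ⬝ᵥ z = 0) (hz' : ∃ s, r s ⬝ᵥ z ≠ 0) :
    ∃ x' ∈ feasibleSet r β E, IsMinOn (c ⬝ᵥ ·) (feasibleSet r β E) x' ∧
      activeSet r β x ⊂ activeSet r β x' := by
  have descend (z : κ → ℝ) (hz : ∀ s ∈ activeSet r β x, r s ⬝ᵥ z = 0) (hc : c ⬝ᵥ z ≤ 0)
      (hneg : ∃ s, r s ⬝ᵥ z < 0) : ∃ x' ∈ feasibleSet r β E,
        IsMinOn (c ⬝ᵥ ·) (feasibleSet r β E) x' ∧ activeSet r β x ⊂ activeSet r β x' := by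
    obtain ⟨t, ht, hfeas, hss⟩ := exists_add_smul_activeSet_ssubset hx.1 hz hneg
    refine ⟨x + t • z, ⟨hfeas, hx.2.trans hss.1⟩, isMinOn_iff.2 fun y hy => ?_, hss⟩
    calc c ⬝ᵥ (x + t • z) = c ⬝ᵥ x + t * c ⬝ᵥ z := by simp [dotProduct_add, dotProduct_smul]
      _ ≤ c ⬝ᵥ x := by nlinarith
      _ ≤ c ⬝ᵥ y := isMinOn_iff.1 hmin y hy
  have ascend (z : κ → ℝ) (hz : ∀ s ∈ activeSet r β x, r s ⬝ᵥ z = 0)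
      (hpos : ∀ s, 0 ≤ r s ⬝ᵥ z) : 0 ≤ c ⬝ᵥ z := by
    have hxz : x + z ∈ feasibleSet r β E := by
      refine ⟨fun s => ?_, fun s hs => ?_⟩
      · simpa [dotProduct_add] using add_le_add (hx.1 s) (hpos s)
      · simpa using activeSet_subset_activeSet_add_smul hz 1 (hx.2 hs)
    simpa [dotProduct_add] using isMinOn_iff.1 hmin _ hxz
  wlog hc : c ⬝ᵥ z ≤ 0 generalizing z
  · exact this (z := -z) (by simpa using hz) (by simpa using hz')
      (by rw [dotProduct_neg, neg_nonpos]; exact (not_le.1 hc).le)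
  by_cases hneg : ∃ s, r s ⬝ᵥ z < 0
  · exact descend z hz hc hneg
  push Not at hneg
  obtain ⟨s, hs⟩ := hz'
  have hc0 : c ⬝ᵥ z = 0 := le_antisymm hc (ascend z hz hneg)
  exact descend (-z) (by simpa using hz) (by simp [hc0]) ⟨s, by simpa using (hneg s).lt_of_ne' hs⟩

lemma exists_isMinOn_span_activeSet_eq_top [Finite ι]
    (hpointed : ∀ z : κ → ℝ, (∀ s, r s ⬝ᵥ z = 0) → z = 0) {x₀ : κ → ℝ}
    (hx₀ : x₀ ∈ feasibleSet r β E) (hmin₀ : IsMinOn (c ⬝ᵥ ·) (feasibleSet r β E) x₀) :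
    ∃ x ∈ feasibleSet r β E, IsMinOn (c ⬝ᵥ ·) (feasibleSet r β E) x ∧
      Submodule.span ℝ (r '' activeSet r β x) = ⊤ := by
  obtain ⟨x, ⟨hx, hmin⟩, hmax⟩ := Set.Finite.exists_maximalFor' (activeSet r β)
    {x | x ∈ feasibleSet r β E ∧ IsMinOn (c ⬝ᵥ ·) (feasibleSet r β E) x} (Set.toFinite _)
    ⟨x₀, hx₀, hmin₀⟩
  refine ⟨x, hx, hmin, ?_⟩
  by_contra hne
  obtain ⟨z, hz0, hz⟩ := exists_ne_zero_forall_mem_dotProduct_eq_zero (lt_top_iff_ne_top.2 hne)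
  obtain ⟨x', hx', hmin', hss⟩ := exists_isMinOn_activeSet_ssubset hx hmin
    (fun s hs => hz _ (Submodule.subset_span ⟨s, hs, rfl⟩))
    (by by_contra! h; exact hz0 (hpointed z h))
  exact hss.2 (hmax ⟨hx', hmin'⟩ hss.1)

end Polyhedron

section StandardForm

variable {d m n : ℕ}

def constraintRows (A_E : Matrix (Fin m) (Fin d) ℝ) (A_I : Matrix (Fin n) (Fin d) ℝ) :
    Fin m ⊕ Fin n ⊕ Fin d ⊕ Fin d → Fin d → ℝ :=
  Sum.elim (fun i => A_E i)
    (Sum.elim (fun j => A_I j) (Sum.elim (fun i => Pi.single i 1) (fun i => -Pi.single i 1)))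

def constraintRhs (b_E : Fin m → ℝ) (b_I : Fin n → ℝ) (ℓ u : Fin d → ℝ) :
    Fin m ⊕ Fin n ⊕ Fin d ⊕ Fin d → ℝ :=
  Sum.elim b_E (Sum.elim b_I (Sum.elim ℓ (fun i => -u i)))

lemma eq_zero_of_forall_constraintRows_dotProduct_eq_zero (A_E : Matrix (Fin m) (Fin d) ℝ)
    (A_I : Matrix (Fin n) (Fin d) ℝ) (z : Fin d → ℝ)
    (hz : ∀ s, constraintRows A_E A_I s ⬝ᵥ z = 0) : z = 0 :=
  funext fun i => by simpa [constraintRows] using hz (Sum.inr (Sum.inr (Sum.inl i)))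

lemma mem_feasibleSet_constraintRows_iff {A_E : Matrix (Fin m) (Fin d) ℝ}
    {A_I : Matrix (Fin n) (Fin d) ℝ} {b_E : Fin m → ℝ} {b_I : Fin n → ℝ} {ℓ u x : Fin d → ℝ} :
    x ∈ feasibleSet (constraintRows A_E A_I) (constraintRhs b_E b_I ℓ u) (Set.range Sum.inl) ↔
      A_E *ᵥ x = b_E ∧ A_I *ᵥ x ≥ b_I ∧ ℓ ≤ x ∧ x ≤ u := by
  simp only [feasibleSet, constraintRhs, constraintRows, Sum.forall, Sum.elim_inl, Sum.elim_inr,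
    single_dotProduct, one_mul, neg_dotProduct, neg_le_neg_iff, activeSet, Set.range_subset_iff,
    Set.mem_ofPred_eq, funext_iff, mulVec, ge_iff_le, Pi.le_def]
  exact ⟨fun ⟨⟨_, hI, hl, hu⟩, hE⟩ => ⟨hE, hI, hl, hu⟩,
    fun ⟨hE, hI, hl, hu⟩ => ⟨⟨fun i => (hE i).ge, hI, hl, hu⟩, hE⟩⟩

end StandardForm

theorem facet_basic_optimal_exists (d m n : ℕ)
    (A_E : Matrix (Fin m) (Fin d) ℝ) (A_I : Matrix (Fin n) (Fin d) ℝ)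
    (b_E : Fin m → ℝ) (b_I : Fin n → ℝ) (ℓ u : Fin d → ℝ) (c : Fin d → ℝ)
    (r : Fin m ⊕ Fin n ⊕ Fin d ⊕ Fin d → Fin d → ℝ)
    (β : Fin m ⊕ Fin n ⊕ Fin d ⊕ Fin d → ℝ)
    (hr : r = Sum.elim (fun i => A_E i)
          (Sum.elim (fun j => A_I j)
            (Sum.elim (fun i => Pi.single i (1 : ℝ))
              (fun i => -Pi.single i (1 : ℝ)))))
    (hβ : β = Sum.elim b_E (Sum.elim b_I (Sum.elim ℓ (fun i => -u i))))
    (hopt : ∃ x₀ : Fin d → ℝ,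
      (A_E *ᵥ x₀ = b_E ∧ A_I *ᵥ x₀ ≥ b_I ∧ ℓ ≤ x₀ ∧ x₀ ≤ u) ∧
      ∀ xbar : Fin d → ℝ, (A_E *ᵥ xbar = b_E ∧ A_I *ᵥ xbar ≥ b_I ∧ ℓ ≤ xbar ∧ xbar ≤ u) →
        c ⬝ᵥ x₀ ≤ c ⬝ᵥ xbar) :
    ∃ x : Fin d → ℝ,
      (A_E *ᵥ x = b_E ∧ A_I *ᵥ x ≥ b_I ∧ ℓ ≤ x ∧ x ≤ u) ∧
      (∃ S : Finset (Fin m ⊕ Fin n ⊕ Fin d ⊕ Fin d),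
        S.card = d ∧
        LinearIndependent ℝ (fun s : S => r s) ∧
        ∀ s ∈ S, r s ⬝ᵥ x = β s) ∧
      (∀ xbar : Fin d → ℝ, (A_E *ᵥ xbar = b_E ∧ A_I *ᵥ xbar ≥ b_I ∧ ℓ ≤ xbar ∧ xbar ≤ u) →
        c ⬝ᵥ x ≤ c ⬝ᵥ xbar) := by
  obtain rfl : r = constraintRows A_E A_I := hr
  obtain rfl : β = constraintRhs b_E b_I ℓ u := hβ
  obtain ⟨x₀, hx₀, hmin₀⟩ := hopt
  obtain ⟨x, hx, hmin, hspan⟩ := exists_isMinOn_span_activeSet_eq_top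
    (eq_zero_of_forall_constraintRows_dotProduct_eq_zero A_E A_I)
    (mem_feasibleSet_constraintRows_iff.2 hx₀)
    (isMinOn_iff.2 fun y hy => hmin₀ y (mem_feasibleSet_constraintRows_iff.1 hy))
  obtain ⟨S, hS, hcard, hli⟩ := exists_finset_linearIndependent_of_span_image_eq_top hspan
  refine ⟨x, mem_feasibleSet_constraintRows_iff.1 hx, ⟨S, ?_, hli, fun s hs => hS hs⟩,
    fun y hy => isMinOn_iff.1 hmin y (mem_feasibleSet_constraintRows_iff.2 hy)⟩
  rwa [Module.finrank_fin_fun] at hcard
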